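/- Let (φ_j)_{j≥1} be a sequence of k-algebra automorphisms of R = k⟦x₁,…,xₙ⟧ and (c_j)_{j≥1} a sequence of integers with c_j ≥ 2 for all j and c_j → ∞, such that φ_j(xᵢ) − xᵢ ∈ m^{c_j} for all 1 ≤ i ≤ n and all j ≥ 1. Then for every h ∈ R the sequence (φ_j∘⋯∘φ₁(h))_{j≥1} converges in the m-adic topology, and the map ψ : R → R defined by ψ(h) = lim_{j→∞} φ_j∘⋯∘φ₁(h) is a k-algebra automorphism of R. -/

import Mathlib

/-! Each `φ_j` moves every series by an element of `m ^ c_j`: it does so on the variables, hence on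
polynomials, and truncating a series in degree `c_j` leaves an element of `m ^ c_j`. Since `m ^ N`
consists of the series of order at least `N`, the partial composites `φ_j ∘ ⋯ ∘ φ_0 (h)` and
likewise their inverses converge coefficientwise. Limits of algebra maps are algebra maps, and the
limit of the inverses inverts the limit because every automorphism preserves every `m ^ N`. -/

noncomputable section

open MvPowerSeries

/-- The maximal ideal of `k⟦x₁,…,xₙ⟧`: series with zero constant term. -/
def mIdeal (k : Type*) [CommRing k] (n : ℕ) : Ideal (MvPowerSeries (Fin n) k) :=
  RingHom.ker (MvPowerSeries.constantCoeff : MvPowerSeries (Fin n) k →+* k)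

/-- The composite `φ_j ∘ ⋯ ∘ φ_0` of a sequence of algebra automorphisms. -/
def comps {k : Type*} [Field k] {n : ℕ}
    (φ : ℕ → (MvPowerSeries (Fin n) k ≃ₐ[k] MvPowerSeries (Fin n) k)) :
    ℕ → MvPowerSeries (Fin n) k → MvPowerSeries (Fin n) k
  | 0 => φ 0
  | j + 1 => fun h => φ (j + 1) (comps φ j h)

open Filter Finsupp

theorem MvPowerSeries.coeff_X_mul {σ R : Type*} [CommSemiring R] (i : σ) (d : σ →₀ ℕ)
    (g : MvPowerSeries σ R) :
    coeff d (X i * g) = if single i 1 ≤ d then coeff (d - single i 1) g else 0 := by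
  rw [X, coeff_monomial_mul, one_mul]

theorem MvPowerSeries.exists_sum_X_mul_eq_of_le_order {σ R : Type*} [CommSemiring R]
    [LinearOrder σ] [Fintype σ] {N : ℕ} {f : MvPowerSeries σ R}
    (hf : ((N + 1 : ℕ) : ℕ∞) ≤ f.order) :
    ∃ g : σ → MvPowerSeries σ R,
      (∀ i, (N : ℕ∞) ≤ (g i).order) ∧ ∑ i, X i * g i = f := by
  classical
  -- `X i * g i` collects the monomials of `f` whose smallest variable is `X i`.
  let g : σ → MvPowerSeries σ R := fun i e =>
    if (e + single i 1).support.min = (i : WithTop σ) then coeff (e + single i 1) f else 0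
  have coeff_g (i : σ) (e : σ →₀ ℕ) : coeff e (g i) =
      if (e + single i 1).support.min = (i : WithTop σ) then coeff (e + single i 1) f else 0 :=
    rfl
  have coeff_X_mul_g (i : σ) (d : σ →₀ ℕ) :
      coeff d (X i * g i) = if d.support.min = (i : WithTop σ) then coeff d f else 0 := by
    rw [coeff_X_mul]
    by_cases hid : single i 1 ≤ d
    · rw [if_pos hid, coeff_g, tsub_add_cancel_of_le hid]
    · rw [if_neg hid, if_neg]
      intro hmin
      exact hid (single_le_iff.2 (Nat.one_le_iff_ne_zero.2
        (mem_support_iff.1 (Finset.mem_of_min hmin))))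
  refine ⟨g, fun i => le_order fun e he => ?_, ?_⟩
  · rw [coeff_g]
    split_ifs
    · refine coeff_of_lt_order ((Nat.cast_lt.2 ?_).trans_le hf)
      rw [map_add, degree_single]
      exact Nat.add_lt_add_right (Nat.cast_lt.1 he) 1
    · rfl
  · ext d
    simp only [map_sum, coeff_X_mul_g]
    cases hmin : d.support.min with
    | top =>
      rw [Finset.min_eq_top, support_eq_empty] at hmin
      subst hmin
      simp only [WithTop.top_ne_coe, if_false, Finset.sum_const_zero]
      exact (coeff_of_lt_order ((Nat.cast_lt.2 N.succ_pos).trans_le hf)).symm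
    | coe i₀ => simp

theorem MvPowerSeries.coe_sub_coe_mem_of_forall_X_sub_X_mem {σ R : Type*} [CommRing R]
    (e : MvPowerSeries σ R →ₐ[R] MvPowerSeries σ R) {I : Ideal (MvPowerSeries σ R)}
    (hX : ∀ i, e (X i) - X i ∈ I) (p : MvPolynomial σ R) : e p - p ∈ I := by
  induction p using MvPolynomial.induction_on with
  | C a => simp [MvPolynomial.coe_C, c_eq_algebraMap]
  | add p q hp hq =>
    rw [MvPolynomial.coe_add, map_add, add_sub_add_comm]
    exact add_mem hp hq
  | mul_X p i hp =>
    rw [MvPolynomial.coe_mul, MvPolynomial.coe_X, map_mul]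
    convert add_mem (I.mul_mem_left (e p) (hX i)) (I.mul_mem_right (X i) hp) using 1
    ring

section MaximalIdeal

variable {k : Type*} {n : ℕ}

section CommRing

variable [CommRing k] {N : ℕ} {f g : MvPowerSeries (Fin n) k}

theorem X_mem_mIdeal (i : Fin n) : X i ∈ mIdeal k n :=
  constantCoeff_X i

theorem le_order_of_mem_mIdeal_pow (hf : f ∈ mIdeal k n ^ N) : (N : ℕ∞) ≤ f.order := by
  induction N generalizing f with
  | zero => simp
  | succ N ih =>
    rw [pow_succ] at hf
    refine Submodule.mul_induction_on hf (fun a ha b hb => ?_) fun x y hx hy => ?_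
    · calc ((N + 1 : ℕ) : ℕ∞) = N + 1 := by push_cast; rfl
        _ ≤ a.order + b.order :=
          add_le_add (ih ha) ((one_le_order_iff_constCoeff_eq_zero).2 (RingHom.mem_ker.1 hb))
        _ ≤ (a * b).order := le_order_mul
    · exact (le_min hx hy).trans min_order_le_add

theorem mem_mIdeal_pow_of_le_order (hf : (N : ℕ∞) ≤ f.order) : f ∈ mIdeal k n ^ N := by
  induction N generalizing f with
  | zero => simp
  | succ N ih =>
    obtain ⟨g, hg, rfl⟩ := exists_sum_X_mul_eq_of_le_order hf
    rw [pow_succ']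
    exact Ideal.sum_mem _ fun i _ => Ideal.mul_mem_mul (X_mem_mIdeal i) (ih (hg i))

theorem coeff_eq_zero_of_mem_mIdeal_pow (hf : f ∈ mIdeal k n ^ N) {d : Fin n →₀ ℕ}
    (hd : d.degree < N) : coeff d f = 0 :=
  coeff_of_lt_order ((Nat.cast_lt.2 hd).trans_le (le_order_of_mem_mIdeal_pow hf))

theorem eq_of_forall_sub_mem_mIdeal_pow (h : ∀ N, f - g ∈ mIdeal k n ^ N) : f = g := by
  rw [← sub_eq_zero, ← order_eq_top_iff, ENat.eq_top_iff_forall_ge]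
  exact fun N => le_order_of_mem_mIdeal_pow (h N)

end CommRing

section Field

variable [Field k] {N : ℕ} {f : MvPowerSeries (Fin n) k}

theorem mIdeal_eq_maximalIdeal :
    mIdeal k n = IsLocalRing.maximalIdeal (MvPowerSeries (Fin n) k) := by
  ext f
  rw [IsLocalRing.mem_maximalIdeal, mem_nonunits_iff, isUnit_iff_constantCoeff,
    isUnit_iff_ne_zero, not_not]
  rfl

theorem apply_mem_mIdeal_pow {F : Type*} [EquivLike F (MvPowerSeries (Fin n) k)
    (MvPowerSeries (Fin n) k)] [RingEquivClass F (MvPowerSeries (Fin n) k)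
    (MvPowerSeries (Fin n) k)] (e : F) (hf : f ∈ mIdeal k n ^ N) : e f ∈ mIdeal k n ^ N := by
  have hmap : (mIdeal k n ^ N).map e = mIdeal k n ^ N := by
    rw [Ideal.map_pow, mIdeal_eq_maximalIdeal]
    exact congrArg (· ^ N)
      (IsLocalRing.map_ringEquiv_maximalIdeal (RingEquivClass.toRingEquiv e))
  exact hmap ▸ Ideal.mem_map_of_mem e hf

theorem apply_sub_self_mem_mIdeal_pow
    (e : MvPowerSeries (Fin n) k ≃ₐ[k] MvPowerSeries (Fin n) k) {C : ℕ}
    (hX : ∀ i, e (X i) - X i ∈ mIdeal k n ^ C) (f : MvPowerSeries (Fin n) k) :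
    e f - f ∈ mIdeal k n ^ C := by
  set P : MvPolynomial (Fin n) k := truncTotal C f
  have hrem : f - P ∈ mIdeal k n ^ C := mem_mIdeal_pow_of_le_order <| le_order fun d hd => by
    rw [map_sub, MvPolynomial.coeff_coe, coeff_truncTotal _ (Nat.cast_lt.1 hd), sub_self]
  have hP := coe_sub_coe_mem_of_forall_X_sub_X_mem e.toAlgHom hX P
  rw [show e f - f = e (f - P) - (f - P) + (e P - P) by rw [map_sub]; ring]
  exact add_mem (sub_mem (apply_mem_mIdeal_pow e hrem) hrem) hP

theorem symm_X_sub_X_mem_mIdeal_pow (e : MvPowerSeries (Fin n) k ≃ₐ[k] MvPowerSeries (Fin n) k)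
    {C : ℕ} {i : Fin n} (hX : e (X i) - X i ∈ mIdeal k n ^ C) :
    e.symm (X i) - X i ∈ mIdeal k n ^ C := by
  have := neg_mem (apply_mem_mIdeal_pow e.symm hX)
  rwa [map_sub, AlgEquiv.symm_apply_apply, neg_sub] at this

end Field

end MaximalIdeal

section Convergence

variable {k : Type*} {n : ℕ}

def MAdicTendsto [CommRing k] (a : ℕ → MvPowerSeries (Fin n) k) (L : MvPowerSeries (Fin n) k) :
    Prop :=
  ∀ N : ℕ, ∀ᶠ j in atTop, a j - L ∈ mIdeal k n ^ N

section CommRing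

variable [CommRing k] {a b : ℕ → MvPowerSeries (Fin n) k} {L M : MvPowerSeries (Fin n) k}

theorem mAdicTendsto_const (x : MvPowerSeries (Fin n) k) : MAdicTendsto (fun _ => x) x :=
  fun N => Eventually.of_forall fun _ => by simp

theorem MAdicTendsto.unique (ha : MAdicTendsto a L) (ha' : MAdicTendsto a M) : L = M :=
  eq_of_forall_sub_mem_mIdeal_pow fun N => by
    obtain ⟨j, hj, hj'⟩ := ((ha N).and (ha' N)).exists
    simpa using sub_mem hj' hj

theorem MAdicTendsto.add (ha : MAdicTendsto a L) (hb : MAdicTendsto b M) :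
    MAdicTendsto (fun j => a j + b j) (L + M) := fun N => by
  filter_upwards [ha N, hb N] with j hj hj'
  simpa [add_sub_add_comm] using add_mem hj hj'

theorem MAdicTendsto.mul (ha : MAdicTendsto a L) (hb : MAdicTendsto b M) :
    MAdicTendsto (fun j => a j * b j) (L * M) := fun N => by
  filter_upwards [ha N, hb N] with j hj hj'
  convert add_mem (Ideal.mul_mem_left _ (a j) hj') (Ideal.mul_mem_right M _ hj) using 1
  ring

theorem mAdicTendsto_of_eventually_coeff_eq
    (h : ∀ d, ∀ᶠ j in atTop, coeff d (a j) = coeff d L) : MAdicTendsto a L := fun N => by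
  filter_upwards [(eventually_all_finite (finite_of_degree_lt N)).2 fun d _ => h d] with j hj
  refine mem_mIdeal_pow_of_le_order (le_order fun d hd => ?_)
  rw [map_sub, hj d (Nat.cast_lt.1 hd), sub_self]

-- Each coefficient of the sequence is eventually constant; its final value is the limit.
theorem exists_mAdicTendsto_of_sub_mem {c : ℕ → ℕ} (hc : Tendsto c atTop atTop)
    (ha : ∀ j, a (j + 1) - a j ∈ mIdeal k n ^ c j) : ∃ L, MAdicTendsto a L := by
  have hconst (d : Fin n →₀ ℕ) : EventuallyConst (fun j => coeff d (a j)) atTop := by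
    refine eventuallyConst_atTop_nat.2 (eventually_atTop.1 ?_)
    filter_upwards [hc.eventually_gt_atTop d.degree] with j hj
    rw [← sub_eq_zero, ← map_sub]
    exact coeff_eq_zero_of_mem_mIdeal_pow (ha j) hj
  choose L hL using fun d => eventuallyConst_iff_exists_eventuallyEq.1 (hconst d)
  exact ⟨L, mAdicTendsto_of_eventually_coeff_eq hL⟩

end CommRing

section Field

variable [Field k]

-- `(A j).symm x - h = (A j).symm (x - A j h)`, and automorphisms preserve every `m ^ N`.
theorem MAdicTendsto.symm_apply
    {A : ℕ → MvPowerSeries (Fin n) k ≃ₐ[k] MvPowerSeries (Fin n) k}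
    {h x : MvPowerSeries (Fin n) k} (hA : MAdicTendsto (fun j => A j h) x) :
    MAdicTendsto (fun j => (A j).symm x) h := fun N => by
  filter_upwards [hA N] with j hj
  have := apply_mem_mIdeal_pow (A j).symm (neg_mem hj)
  rwa [neg_sub, map_sub, AlgEquiv.symm_apply_apply] at this

theorem exists_algEquiv_mAdicTendsto
    (A : ℕ → MvPowerSeries (Fin n) k ≃ₐ[k] MvPowerSeries (Fin n) k)
    (hA : ∀ h, ∃ x, MAdicTendsto (fun j => A j h) x)
    (hA_symm : ∀ h, ∃ x, MAdicTendsto (fun j => (A j).symm h) x) :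
    ∃ ψ : MvPowerSeries (Fin n) k ≃ₐ[k] MvPowerSeries (Fin n) k,
      ∀ h, MAdicTendsto (fun j => A j h) (ψ h) := by
  choose L hL using hA
  choose M hM using hA_symm
  have hA_algebraMap (r : k) :
      MAdicTendsto (fun j => A j (algebraMap k _ r)) (algebraMap k _ r) := by
    simpa only [AlgEquiv.commutes] using mAdicTendsto_const (algebraMap k _ r)
  refine ⟨
    { toFun := L
      invFun := M
      left_inv := fun h => (hM (L h)).unique (hL h).symm_apply
      right_inv := fun h => (hL (M h)).unique
        (MAdicTendsto.symm_apply (A := fun j => (A j).symm) (hM h))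
      map_mul' := fun x y => (hL (x * y)).unique
        (by simpa only [map_mul] using (hL x).mul (hL y))
      map_add' := fun x y => (hL (x + y)).unique
        (by simpa only [map_add] using (hL x).add (hL y))
      commutes' := fun r => (hL _).unique (hA_algebraMap r) }, hL⟩

end Field

end Convergence

def partialComp {R A : Type*} [CommSemiring R] [Semiring A] [Algebra R A]
    (φ : ℕ → A ≃ₐ[R] A) : ℕ → A ≃ₐ[R] A
  | 0 => φ 0
  | j + 1 => φ (j + 1) * partialComp φ j

theorem comps_eq_partialComp {k : Type*} [Field k] {n : ℕ}
    (φ : ℕ → MvPowerSeries (Fin n) k ≃ₐ[k] MvPowerSeries (Fin n) k) :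
    ∀ j, comps φ j = partialComp φ j
  | 0 => rfl
  | j + 1 => funext fun h => congrArg (φ (j + 1)) (congrFun (comps_eq_partialComp φ j) h)

theorem stmt3_general {k : Type*} [Field k] {n : ℕ}
    (φ : ℕ → (MvPowerSeries (Fin n) k ≃ₐ[k] MvPowerSeries (Fin n) k))
    (c : ℕ → ℕ) (hc : Filter.Tendsto c Filter.atTop Filter.atTop)
    (hφ : ∀ j, ∀ i : Fin n, φ j (X i) - X i ∈ mIdeal k n ^ c j) :
    ∃ ψ : MvPowerSeries (Fin n) k ≃ₐ[k] MvPowerSeries (Fin n) k,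
      ∀ h : MvPowerSeries (Fin n) k, ∀ N : ℕ, ∃ J : ℕ, ∀ j ≥ J,
        comps φ j h - ψ h ∈ mIdeal k n ^ N := by
  set A := partialComp φ
  have hstep (h : MvPowerSeries (Fin n) k) (j : ℕ) :
      A (j + 1) h - A j h ∈ mIdeal k n ^ c (j + 1) :=
    apply_sub_self_mem_mIdeal_pow (φ (j + 1)) (hφ (j + 1)) (A j h)
  have hstep_symm (h : MvPowerSeries (Fin n) k) (j : ℕ) :
      (A (j + 1)).symm h - (A j).symm h ∈ mIdeal k n ^ c (j + 1) := by
    have := apply_mem_mIdeal_pow (A j).symm (apply_sub_self_mem_mIdeal_pow (φ (j + 1)).symm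
      (fun i => symm_X_sub_X_mem_mIdeal_pow _ (hφ (j + 1) i)) h)
    -- `(A (j + 1)).symm h` unfolds to `(A j).symm ((φ (j + 1)).symm h)`.
    rwa [map_sub] at this
  have hc' := hc.comp (tendsto_add_atTop_nat 1)
  obtain ⟨ψ, hψ⟩ := exists_algEquiv_mAdicTendsto A
    (fun h => exists_mAdicTendsto_of_sub_mem hc' (hstep h))
    (fun h => exists_mAdicTendsto_of_sub_mem hc' (hstep_symm h))
  refine ⟨ψ, fun h N => ?_⟩
  obtain ⟨J, hJ⟩ := eventually_atTop.1 (hψ h N)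
  exact ⟨J, fun j hj => comps_eq_partialComp φ j ▸ hJ j hj⟩

/-- Let `(φ_j)` be a sequence of `k`-algebra automorphisms of `R = k⟦x₁,…,xₙ⟧` and `(c_j)` a
sequence of integers with `c_j ≥ 2` and `c_j → ∞`, such that `φ_j(xᵢ) − xᵢ ∈ m^{c_j}` for all
`i, j`.  Then for every `h ∈ R` the sequence `(φ_j ∘ ⋯ ∘ φ_0)(h)` converges in the `m`-adic
topology, and the limit map `ψ` is a `k`-algebra automorphism of `R`. -/
theorem stmt3 {k : Type*} [Field k] {n : ℕ}
    (φ : ℕ → (MvPowerSeries (Fin n) k ≃ₐ[k] MvPowerSeries (Fin n) k))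
    (c : ℕ → ℕ) (hc2 : ∀ j, 2 ≤ c j) (hc : Filter.Tendsto c Filter.atTop Filter.atTop)
    (hφ : ∀ j, ∀ i : Fin n, φ j (X i) - X i ∈ mIdeal k n ^ c j) :
    ∃ ψ : MvPowerSeries (Fin n) k ≃ₐ[k] MvPowerSeries (Fin n) k,
      ∀ h : MvPowerSeries (Fin n) k, ∀ N : ℕ, ∃ J : ℕ, ∀ j ≥ J,
        comps φ j h - ψ h ∈ mIdeal k n ^ N :=
  stmt3_general φ c hc hφ
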